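/- arXiv:1409.8670 — 4 statements merged into one kernel-verified Lean document; each statement's English description precedes it below -/
import Mathlib

section
/- Let G = (L, R, E) be a finite bipartite graph in which every vertex of L has degree at least k and every vertex of R has degree at most d, where k ≥ d ≥ 1. Then any maximal matching M of G satisfies |M| ≥ (k/(k+d-1))·|L|. In particular, since the maximum matching has size at most |L|, every maximal matching is a (k/(k+d-1))-approximation of the maximum matching. -/
/-!
Let `U` be the set of left vertices not covered by `M`. Maximality puts every neighbour of a
vertex of `U` among the right ends of `M`, so there are at least `k·|U|` pairs `(i, e) ∈ U × M`
with `i` adjacent to the right end of `e`. The right end of `e ∈ M` is also adjacent to the left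
end of `e`, which is not in `U`, so it has at most `d - 1` neighbours in `U`, and there are at
most `(d - 1)·|M|` such pairs. Hence `k·|U| + |M| ≤ d·|M|`, and `|L| ≤ |U| + |M|` turns this
into `k·|L| ≤ (k + d - 1)·|M|`.
-/

open Finset

lemma card_filter_lt_card_filter_univ {α : Type*} [Fintype α] {p : α → Prop} [DecidablePred p]
    {s : Finset α} {a : α} (hpa : p a) (has : a ∉ s) :
    #(s.filter p) < #(univ.filter p) :=
  card_lt_card <| ssubset_iff_of_subset (monotone_filter_left p (subset_univ s)) |>.2
    ⟨a, by simpa using hpa, fun ha => has (mem_filter.1 ha).1⟩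

lemma card_univ_le_card_sdiff_image_fst_add_card {L R : Type*} [Fintype L] [DecidableEq L]
    (M : Finset (L × R)) : Fintype.card L ≤ #(univ \ M.image Prod.fst) + #M :=
  card_le_card_sdiff_add_card.trans (Nat.add_le_add_left card_image_le _)

section BipartiteMatching

variable {L R : Type*} [Fintype L] [Fintype R] [DecidableEq L] {Adj : L → R → Prop}
  [∀ i j, Decidable (Adj i j)] {M : Finset (L × R)}

lemma card_filter_adj_le_card_filter_adj_snd [DecidableEq R]
    (hmax : ∀ i : L, ∀ j : R, Adj i j → (∃ e ∈ M, e.1 = i) ∨ (∃ e ∈ M, e.2 = j))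
    {i : L} (hi : i ∈ univ \ M.image Prod.fst) :
    #(univ.filter (fun j : R => Adj i j)) ≤ #(M.filter (fun e => Adj i e.2)) := by
  have hcovered :
      univ.filter (fun j : R => Adj i j) ⊆ (M.filter (fun e => Adj i e.2)).image Prod.snd := by
    intro j hj
    have hij : Adj i j := (mem_filter.1 hj).2
    rcases hmax i j hij with ⟨e, he, rfl⟩ | ⟨e, he, rfl⟩
    · exact absurd (mem_image_of_mem Prod.fst he) (mem_sdiff.1 hi).2
    · exact mem_image_of_mem Prod.snd (mem_filter.2 ⟨he, hij⟩)
  exact (card_le_card hcovered).trans card_image_le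

theorem mul_card_sdiff_image_fst_add_card_le (k d : ℕ)
    (hL : ∀ i : L, k ≤ (univ.filter (fun j : R => Adj i j)).card)
    (hR : ∀ j : R, (univ.filter (fun i : L => Adj i j)).card ≤ d)
    (hME : ∀ e ∈ M, Adj e.1 e.2)
    (hmax : ∀ i : L, ∀ j : R, Adj i j → (∃ e ∈ M, e.1 = i) ∨ (∃ e ∈ M, e.2 = j)) :
    k * #(univ \ M.image Prod.fst) + #M ≤ d * #M := by
  classical
  set U := univ \ M.image Prod.fst
  have hleft : k * #U ≤ ∑ e ∈ M, #(U.filter (fun i => Adj i e.2)) :=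
    calc k * #U = ∑ _i ∈ U, k := by rw [sum_const, smul_eq_mul, mul_comm]
      _ ≤ ∑ i ∈ U, #(M.filter (fun e => Adj i e.2)) :=
        sum_le_sum fun i hi => (hL i).trans (card_filter_adj_le_card_filter_adj_snd hmax hi)
      _ = ∑ e ∈ M, #(U.filter (fun i => Adj i e.2)) :=
        sum_card_bipartiteAbove_eq_sum_card_bipartiteBelow (r := fun i (e : L × R) => Adj i e.2)
  have hright : ∀ e ∈ M, #(U.filter (fun i => Adj i e.2)) + 1 ≤ d := fun e he =>
    (card_filter_lt_card_filter_univ (p := fun i => Adj i e.2) (hME e he)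
      (fun h => (mem_sdiff.1 h).2 (mem_image_of_mem Prod.fst he))).trans_le (hR e.2)
  calc k * #U + #M ≤ ∑ e ∈ M, (#(U.filter (fun i => Adj i e.2)) + 1) := by
        rw [sum_add_distrib, card_eq_sum_ones M]
        exact Nat.add_le_add_right hleft _
    _ ≤ ∑ _e ∈ M, d := sum_le_sum hright
    _ = d * #M := by rw [sum_const, smul_eq_mul, mul_comm]

theorem mul_card_add_card_le (k d : ℕ)
    (hL : ∀ i : L, k ≤ (univ.filter (fun j : R => Adj i j)).card)
    (hR : ∀ j : R, (univ.filter (fun i : L => Adj i j)).card ≤ d)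
    (hME : ∀ e ∈ M, Adj e.1 e.2)
    (hmax : ∀ i : L, ∀ j : R, Adj i j → (∃ e ∈ M, e.1 = i) ∨ (∃ e ∈ M, e.2 = j)) :
    k * Fintype.card L + #M ≤ (k + d) * #M :=
  calc k * Fintype.card L + #M ≤ k * (#(univ \ M.image Prod.fst) + #M) + #M :=
        Nat.add_le_add_right
          (Nat.mul_le_mul_left k (card_univ_le_card_sdiff_image_fst_add_card M)) _
    _ ≤ (k + d) * #M := by
        have := mul_card_sdiff_image_fst_add_card_le k d hL hR hME hmax
        linarith

end BipartiteMatching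

theorem stmt_2_general {L R : Type*} [Fintype L] [Fintype R]
    (Adj : L → R → Prop) [∀ i j, Decidable (Adj i j)] (k d : ℕ)
    (hL : ∀ i : L, k ≤ (univ.filter (fun j : R => Adj i j)).card)
    (hR : ∀ j : R, (univ.filter (fun i : L => Adj i j)).card ≤ d)
    (M : Finset (L × R))
    (hME : ∀ e ∈ M, Adj e.1 e.2)
    (hmax : ∀ i : L, ∀ j : R, Adj i j →
      (∃ e ∈ M, e.1 = i) ∨ (∃ e ∈ M, e.2 = j)) :
    ((k : ℝ) / (k + d - 1)) * Fintype.card L ≤ M.card := by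
  classical
  have hcount : (k : ℝ) * Fintype.card L ≤ (k + d - 1) * M.card := by
    have hnat := mul_card_add_card_le k d hL hR hME hmax
    have : (k : ℝ) * Fintype.card L + M.card ≤ (k + d) * M.card := by exact_mod_cast hnat
    linarith
  rcases le_or_gt ((k : ℝ) + d - 1) 0 with hnonpos | hpos
  · calc (k : ℝ) / (k + d - 1) * Fintype.card L ≤ 0 :=
          mul_nonpos_of_nonpos_of_nonneg (div_nonpos_of_nonneg_of_nonpos k.cast_nonneg hnonpos)
            (Nat.cast_nonneg _)
      _ ≤ M.card := Nat.cast_nonneg _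
  · rwa [div_mul_eq_mul_div, div_le_iff₀ hpos, mul_comm (M.card : ℝ)]

/-- In a `(k,d)`-bounded bipartite graph with `k ≥ d ≥ 1`, every maximal matching `M`
satisfies `|M| ≥ (k/(k+d-1))·|L|`. -/
theorem stmt_2 {L R : Type*} [Fintype L] [Fintype R]
    (Adj : L → R → Prop) [∀ i j, Decidable (Adj i j)] (k d : ℕ)
    (hd : 1 ≤ d) (hkd : d ≤ k)
    (hL : ∀ i : L, k ≤ (univ.filter (fun j : R => Adj i j)).card)
    (hR : ∀ j : R, (univ.filter (fun i : L => Adj i j)).card ≤ d)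
    (M : Finset (L × R))
    (hME : ∀ e ∈ M, Adj e.1 e.2)
    (hM1 : ∀ e ∈ M, ∀ e' ∈ M, e.1 = e'.1 → e = e')
    (hM2 : ∀ e ∈ M, ∀ e' ∈ M, e.2 = e'.2 → e = e')
    (hmax : ∀ i : L, ∀ j : R, Adj i j →
      (∃ e ∈ M, e.1 = i) ∨ (∃ e ∈ M, e.2 = j)) :
    ((k : ℝ) / (k + d - 1)) * Fintype.card L ≤ M.card :=
  stmt_2_general Adj k d hL hR M hME hmax
end

section
/- Let G = (L, R, E) be a finite bipartite graph in which every vertex of L has degree at least k and every vertex of R has degree at most d, where k ≥ 1 and d ≥ 2. Then G has a matching M in which the number of unmatched vertices of L is at most (1 − 1/d)^k · |L|; equivalently, G has a matching of size at least (1 − (1 − 1/d)^k)·|L|. -/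
open Finset

/-!
Process the right vertices one at a time, matching each to an unmatched neighbour of maximal
degree into the already processed vertices `S`. With `r = (1 - 1/d)⁻¹` the potential
`∑_{i unmatched} r ^ deg_S i` starts at `|L|` and never increases: processing `j` multiplies the
terms of its at most `d - 1` other unmatched neighbours by `r`, an increase of at most
`(d - 1)(r - 1) r ^ D = r ^ D`, while the term `r ^ D` of the neighbour matched to `j` disappears.
At the end every unmatched vertex contributes at least `r ^ k`, so at most `(1 - 1/d) ^ k |L|`
of them remain.
-/

namespace GreedyMatching

variable {L R : Type*} {Adj : L → R → Prop}

structure IsMatchingInto (Adj : L → R → Prop) (S : Finset R) (M : Finset (L × R)) : Prop where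
  adj : ∀ e ∈ M, Adj e.1 e.2
  snd_mem : ∀ e ∈ M, e.2 ∈ S
  injOn_fst : Set.InjOn Prod.fst (M : Set (L × R))
  injOn_snd : Set.InjOn Prod.snd (M : Set (L × R))

lemma IsMatchingInto.mono {S S' : Finset R} {M : Finset (L × R)} (hM : IsMatchingInto Adj S M)
    (hS : S ⊆ S') : IsMatchingInto Adj S' M :=
  { hM with snd_mem := fun e he => hS (hM.snd_mem e he) }

variable [Fintype L] [DecidableEq L]

def unmatched (M : Finset (L × R)) : Finset L := univ.filter fun i => ∀ e ∈ M, e.1 ≠ i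

lemma mem_unmatched {M : Finset (L × R)} {i : L} : i ∈ unmatched M ↔ ∀ e ∈ M, e.1 ≠ i := by
  simp [unmatched]

lemma unmatched_empty : unmatched (∅ : Finset (L × R)) = univ := by
  simp [unmatched]

lemma unmatched_insert [DecidableEq R] (M : Finset (L × R)) (i : L) (j : R) :
    unmatched (insert (i, j) M) = (unmatched M).erase i := by
  ext i'
  simp [unmatched, eq_comm]

lemma card_add_card_unmatched {M : Finset (L × R)} (hM : Set.InjOn Prod.fst (M : Set (L × R))) :
    #M + #(unmatched M) = Fintype.card L := by
  have hfst : M.image Prod.fst = (unmatched M)ᶜ := by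
    ext i
    simp [unmatched]
  rw [← card_image_of_injOn hM, hfst, card_compl_add_card]

lemma IsMatchingInto.insert [DecidableEq R] {S : Finset R} {M : Finset (L × R)} {i : L} {j : R}
    (hM : IsMatchingInto Adj S M) (hi : i ∈ unmatched M) (hj : j ∉ S) (hij : Adj i j) :
    IsMatchingInto Adj (insert j S) (insert (i, j) M) where
  adj := by
    simpa [hij] using hM.adj
  snd_mem := by
    simpa using fun a b hab => Or.inr (hM.snd_mem (a, b) hab)
  injOn_fst := by
    rw [coe_insert, Set.injOn_insert fun h => mem_unmatched.1 hi _ h rfl]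
    exact ⟨hM.injOn_fst, fun ⟨e, he, hei⟩ => mem_unmatched.1 hi e he hei⟩
  injOn_snd := by
    rw [coe_insert, Set.injOn_insert fun h => hj (hM.snd_mem _ h)]
    exact ⟨hM.injOn_snd, fun ⟨e, he, hej⟩ => hj (hej ▸ hM.snd_mem e he : (i, j).2 ∈ S)⟩

variable [∀ i j, Decidable (Adj i j)]

variable (Adj) in
def seenDeg (S : Finset R) (i : L) : ℕ := #(S.filter (Adj i))

variable (Adj) in
def potential (r : ℝ) (S : Finset R) (M : Finset (L × R)) : ℝ :=
  ∑ i ∈ unmatched M, r ^ seenDeg Adj S i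

omit [Fintype L] [DecidableEq L] in
lemma sum_pow_seenDeg_insert [DecidableEq R] (r : ℝ) {S : Finset R} {j : R} (hj : j ∉ S)
    (T : Finset L) :
    ∑ i ∈ T, r ^ seenDeg Adj (insert j S) i =
      ∑ i ∈ T, r ^ seenDeg Adj S i + ∑ i ∈ T.filter (Adj · j), r ^ seenDeg Adj S i * (r - 1) := by
  rw [sum_filter, ← sum_add_distrib]
  refine sum_congr rfl fun i _ => ?_
  by_cases hij : Adj i j
  · simp [seenDeg, filter_insert, hij, hj, pow_succ]; ring
  · simp [seenDeg, filter_insert, hij]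

lemma potential_insert_of_forall_not_adj [DecidableEq R] (r : ℝ) {S : Finset R} {j : R}
    (hj : j ∉ S) {M : Finset (L × R)} (h : ∀ i ∈ unmatched M, ¬ Adj i j) :
    potential Adj r (insert j S) M = potential Adj r S M := by
  rw [potential, sum_pow_seenDeg_insert r hj, filter_false_of_mem h, sum_empty, add_zero,
    potential]

lemma potential_insert_le [DecidableEq R] {r : ℝ} {d : ℕ} (hr : 1 ≤ r)
    (hrd : ((d : ℝ) - 1) * (r - 1) ≤ 1) {S : Finset R} {j : R} (hj : j ∉ S)
    (hdeg : #(univ.filter (Adj · j)) ≤ d) {M : Finset (L × R)} {i₀ : L}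
    (hi₀ : i₀ ∈ (unmatched M).filter (Adj · j))
    (hmax : ∀ i ∈ (unmatched M).filter (Adj · j), seenDeg Adj S i ≤ seenDeg Adj S i₀) :
    potential Adj r (insert j S) (insert (i₀, j) M) ≤ potential Adj r S M := by
  set U := (unmatched M).filter (Adj · j)
  set D := seenDeg Adj S i₀
  have hU : (#(U.erase i₀) : ℝ) ≤ d - 1 := by
    rw [cast_card_erase_of_mem hi₀, sub_le_sub_iff_right]
    exact_mod_cast (card_le_card (filter_subset_filter _ (subset_univ _))).trans hdeg
  have hgain : ∑ i ∈ U.erase i₀, r ^ seenDeg Adj S i * (r - 1) ≤ r ^ D :=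
    calc ∑ i ∈ U.erase i₀, r ^ seenDeg Adj S i * (r - 1)
        ≤ ∑ i ∈ U.erase i₀, r ^ D * (r - 1) := by
          gcongr with i hi
          exact hmax i (mem_of_mem_erase hi)
      _ = #(U.erase i₀) * (r - 1) * r ^ D := by rw [sum_const, nsmul_eq_mul]; ring
      _ ≤ ((d : ℝ) - 1) * (r - 1) * r ^ D := by gcongr
      _ ≤ r ^ D := mul_le_of_le_one_left (by positivity) hrd
  rw [potential, unmatched_insert, sum_pow_seenDeg_insert r hj, filter_erase, potential,
    ← add_sum_erase _ _ (mem_filter.1 hi₀).1]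
  linarith

lemma exists_isMatchingInto_potential_le [DecidableEq R] {r : ℝ} {d : ℕ} (hr : 1 ≤ r)
    (hrd : ((d : ℝ) - 1) * (r - 1) ≤ 1) (hR : ∀ j, #(univ.filter (Adj · j)) ≤ d)
    (S : Finset R) :
    ∃ M, IsMatchingInto Adj S M ∧ potential Adj r S M ≤ Fintype.card L := by
  induction S using Finset.induction_on with
  | empty =>
    refine ⟨∅, ⟨by simp, by simp, by simp, by simp⟩, ?_⟩
    simp [potential, seenDeg, unmatched_empty]
  | @insert j S hj ih =>
    obtain ⟨M, hM, hpot⟩ := ih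
    by_cases hU : ((unmatched M).filter (Adj · j)).Nonempty
    · obtain ⟨i₀, hi₀, hmax⟩ := exists_max_image _ (seenDeg Adj S) hU
      have ⟨hi₀M, hi₀j⟩ := mem_filter.1 hi₀
      exact ⟨_, hM.insert hi₀M hj hi₀j,
        (potential_insert_le hr hrd hj (hR j) hi₀ hmax).trans hpot⟩
    · refine ⟨M, hM.mono (subset_insert j S), ?_⟩
      rw [potential_insert_of_forall_not_adj r hj fun i hi hij => hU ⟨i, mem_filter.2 ⟨hi, hij⟩⟩]
      exact hpot

lemma card_unmatched_mul_pow_le_potential [Fintype R] {r : ℝ} (hr : 1 ≤ r) {k : ℕ}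
    (hL : ∀ i, k ≤ seenDeg Adj univ i) (M : Finset (L × R)) :
    #(unmatched M) * r ^ k ≤ potential Adj r univ M := by
  rw [← nsmul_eq_mul]
  exact card_nsmul_le_sum _ _ _ fun i _ => pow_le_pow_right₀ hr (hL i)

end GreedyMatching

open GreedyMatching in
theorem stmt_11_general {L R : Type*} [Fintype L] [Fintype R]
    (Adj : L → R → Prop) [∀ i j, Decidable (Adj i j)] (k d : ℕ)
    (hd : 2 ≤ d)
    (hL : ∀ i : L, k ≤ (univ.filter (fun j : R => Adj i j)).card)
    (hR : ∀ j : R, (univ.filter (fun i : L => Adj i j)).card ≤ d) :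
    ∃ M : Finset (L × R),
      (∀ e ∈ M, Adj e.1 e.2) ∧
      (∀ e ∈ M, ∀ e' ∈ M, e.1 = e'.1 → e = e') ∧
      (∀ e ∈ M, ∀ e' ∈ M, e.2 = e'.2 → e = e') ∧
      (1 - (1 - 1 / (d : ℝ)) ^ k) * Fintype.card L ≤ M.card := by
  classical
  have hd' : (1 : ℝ) < d := by exact_mod_cast hd
  set q : ℝ := 1 - 1 / d
  have hq : 0 < q := by simp only [q]; field_simp; linarith
  have hr : 1 ≤ q⁻¹ := (one_le_inv₀ hq).2 (by simp [q])
  have hrd : ((d : ℝ) - 1) * (q⁻¹ - 1) = 1 := by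
    have : (d : ℝ) - 1 ≠ 0 := by linarith
    simp only [q]; field_simp; ring
  obtain ⟨M, hM, hpot⟩ := exists_isMatchingInto_potential_le hr hrd.le hR univ
  refine ⟨M, hM.adj, fun e he e' he' => hM.injOn_fst he he',
    fun e he e' he' => hM.injOn_snd he he', ?_⟩
  have hW := (card_unmatched_mul_pow_le_potential hr hL M).trans hpot
  rw [inv_pow, ← div_eq_mul_inv, div_le_iff₀ (pow_pos hq k)] at hW
  have hcard : (#M : ℝ) + #(unmatched M) = Fintype.card L := by
    exact_mod_cast card_add_card_unmatched hM.injOn_fst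
  linarith

/-- A `(k,d)`-bounded bipartite graph (`k ≥ 1`, `d ≥ 2`, left degrees at least `k`,
right degrees at most `d`) has a matching of size at least `(1 - (1 - 1/d)^k)·|L|`,
equivalently leaving at most `(1 - 1/d)^k·|L|` left vertices unmatched. -/
theorem stmt_11 {L R : Type*} [Fintype L] [Fintype R]
    (Adj : L → R → Prop) [∀ i j, Decidable (Adj i j)] (k d : ℕ)
    (hk : 1 ≤ k) (hd : 2 ≤ d)
    (hL : ∀ i : L, k ≤ (univ.filter (fun j : R => Adj i j)).card)
    (hR : ∀ j : R, (univ.filter (fun i : L => Adj i j)).card ≤ d) :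
    ∃ M : Finset (L × R),
      (∀ e ∈ M, Adj e.1 e.2) ∧
      (∀ e ∈ M, ∀ e' ∈ M, e.1 = e'.1 → e = e') ∧
      (∀ e ∈ M, ∀ e' ∈ M, e.2 = e'.2 → e = e') ∧
      (1 - (1 - 1 / (d : ℝ)) ^ k) * Fintype.card L ≤ M.card :=
  stmt_11_general Adj k d hd hL hR
end

section
/- Let G = (L, R, E) be a finite bipartite graph, let c > 1 be a real number, and suppose every vertex of L has degree at least (ln c)·d while every vertex of R has degree at most d, for some integer d ≥ 2. Then G has a matching in which at least a (1 − 1/c)-fraction of the vertices of L are matched. -/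
open Finset

/-!
Double counting the edges between a set `S` of left vertices and its neighbourhood `N(S)` gives
`d · ln c · |S| ≤ d · |N(S)|`. Since `ln c ≥ 1 - 1/c`, the deficiency `|S| - |N(S)|` is at most
`|S|/c ≤ |L|/c`, and Hall's theorem with deficiency `⌊|L|/c⌋` yields a matching that misses at most
`|L|/c` left vertices.
-/

section Matching

variable {α β : Type*} (r : α → β → Prop)

def IsRelMatching (M : Finset (α × β)) : Prop :=
  (∀ e ∈ M, r e.1 e.2) ∧
    (∀ e ∈ M, ∀ e' ∈ M, e.1 = e'.1 → e = e') ∧ (∀ e ∈ M, ∀ e' ∈ M, e.2 = e'.2 → e = e')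

variable [Fintype α] [Fintype β] [DecidableRel r]

theorem mul_card_le_card_neighbors_of_degree_bounds {δ : ℝ} {d : ℕ} (hd : 0 < d)
    (hα : ∀ a, δ * d ≤ #{b | r a b}) (hβ : ∀ b, #{a | r a b} ≤ d) (S : Finset α) :
    δ * #S ≤ #{b | ∃ a ∈ S, r a b} := by
  have hcount : #S • (δ * d) ≤ #{b | ∃ a ∈ S, r a b} • (d : ℝ) := by
    refine card_nsmul_le_card_nsmul r (fun a ha => (hα a).trans ?_) fun b _ => ?_
    · exact_mod_cast card_le_card fun b hb => by
        simp only [mem_filter, mem_univ, true_and, mem_bipartiteAbove] at hb ⊢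
        exact ⟨⟨a, ha, hb⟩, hb⟩
    · exact_mod_cast (card_le_card (filter_subset_filter _ (subset_univ S))).trans (hβ b)
  simp only [nsmul_eq_mul] at hcount
  have hd' : (0 : ℝ) < d := by exact_mod_cast hd
  nlinarith

/-- **Hall's theorem with deficiency**: add `D` dummy vertices adjacent to everything. -/
theorem exists_isRelMatching_of_card_le_card_add (D : ℕ)
    (hall : ∀ A : Finset α, #A ≤ #{b | ∃ a ∈ A, r a b} + D) :
    ∃ M : Finset (α × β), IsRelMatching r M ∧ Fintype.card α ≤ #M + D := by
  classical
  let r' : α → β ⊕ Fin D → Prop := fun a => Sum.elim (r a) fun _ => True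
  have hall' : ∀ A : Finset α, #A ≤ #{x | ∃ a ∈ A, r' a x} := by
    intro A
    rcases A.eq_empty_or_nonempty with rfl | ⟨a₀, ha₀⟩
    · simp
    have hnbhd : ({x | ∃ a ∈ A, r' a x} : Finset (β ⊕ Fin D)) =
        (({b | ∃ a ∈ A, r a b} : Finset β).disjSum univ) := by
      ext (b | i) <;> simp [r']
      exact ⟨a₀, ha₀⟩
    rw [hnbhd, card_disjSum, card_univ, Fintype.card_fin]
    exact hall A
  obtain ⟨f, hf, hfr⟩ := (Fintype.all_card_le_filter_rel_iff_exists_injective r').1 hall'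
  refine ⟨({e | f e.1 = .inl e.2} : Finset (α × β)), ⟨?_, ?_, ?_⟩, ?_⟩
  · intro e he
    have := hfr e.1
    simp only [mem_filter, mem_univ, true_and] at he
    rwa [he] at this
  · intro e he e' he' h
    simp only [mem_filter, mem_univ, true_and] at he he'
    rw [h, he'] at he
    exact Prod.ext h (Sum.inl_injective he).symm
  · intro e he e' he' h
    simp only [mem_filter, mem_univ, true_and] at he he'
    rw [h, ← he'] at he
    exact Prod.ext (hf he) h
  · have hleft : #{a | ∃ b, f a = .inl b} ≤ #({e | f e.1 = .inl e.2} : Finset (α × β)) :=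
      card_le_card_of_surjOn Prod.fst fun a ha => by
        obtain ⟨b, hb⟩ := (mem_filter.1 ha).2
        exact ⟨(a, b), by simpa using hb, rfl⟩
    have hright : #{a | ¬∃ b, f a = .inl b} ≤ D := by
      refine (card_le_card_of_injOn f (t := univ.map .inr) (fun a ha => ?_) hf.injOn).trans_eq
        (by simp)
      cases h : f a with
      | inl b => exact absurd ⟨b, h⟩ (mem_filter.1 ha).2
      | inr i => simp
    rw [← card_univ, ← card_filter_add_card_filter_not (fun a => ∃ b, f a = .inl b)]
    omega

end Matching

theorem le_add_div_of_log_mul_le {c s t n : ℝ} (hc : 0 < c) (hs : 0 ≤ s) (hsn : s ≤ n)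
    (hst : Real.log c * s ≤ t) : s ≤ t + n / c := by
  have hlog : 1 - c⁻¹ ≤ Real.log c := Real.one_sub_inv_le_log_of_pos hc
  calc s ≤ t + s * c⁻¹ := by nlinarith
    _ ≤ t + n / c := by rw [div_eq_mul_inv]; gcongr

theorem Nat.le_add_floor_of_le_add {s t : ℕ} {x : ℝ} (h : (s : ℝ) ≤ t + x) : s ≤ t + ⌊x⌋₊ := by
  have : (s : ℝ) < t + ⌊x⌋₊ + 1 := h.trans_lt (by linarith [Nat.lt_floor_add_one x])
  exact Nat.lt_succ_iff.1 (by exact_mod_cast this)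

/-- Structural corollary: if every left vertex has degree at least `(ln c)·d` and every
right vertex has degree at most `d`, for a real `c > 1` and an integer `d ≥ 2`, then
the graph has a matching covering at least a `(1 - 1/c)`-fraction of the left side. -/
theorem stmt_12 {L R : Type*} [Fintype L] [Fintype R]
    (Adj : L → R → Prop) [∀ i j, Decidable (Adj i j)] (c : ℝ) (d : ℕ)
    (hc : 1 < c) (hd : 2 ≤ d)
    (hL : ∀ i : L, Real.log c * d ≤ ((univ.filter (fun j : R => Adj i j)).card : ℝ))
    (hR : ∀ j : R, (univ.filter (fun i : L => Adj i j)).card ≤ d) :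
    ∃ M : Finset (L × R),
      (∀ e ∈ M, Adj e.1 e.2) ∧
      (∀ e ∈ M, ∀ e' ∈ M, e.1 = e'.1 → e = e') ∧
      (∀ e ∈ M, ∀ e' ∈ M, e.2 = e'.2 → e = e') ∧
      (1 - 1 / c) * Fintype.card L ≤ M.card := by
  have hc0 : 0 < c := one_pos.trans hc
  have hall : ∀ S : Finset L,
      #S ≤ #{j | ∃ i ∈ S, Adj i j} + ⌊(Fintype.card L : ℝ) / c⌋₊ := fun S =>
    Nat.le_add_floor_of_le_add <| le_add_div_of_log_mul_le hc0 S.card.cast_nonneg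
      (by exact_mod_cast card_le_univ S)
      (mul_card_le_card_neighbors_of_degree_bounds Adj (by omega) hL hR S)
  obtain ⟨M, ⟨hAdj, hfst, hsnd⟩, hcard⟩ := exists_isRelMatching_of_card_le_card_add Adj _ hall
  refine ⟨M, hAdj, hfst, hsnd, ?_⟩
  have hfloor := Nat.floor_le (div_nonneg (Fintype.card L).cast_nonneg hc0.le)
  have hcard' : (Fintype.card L : ℝ) ≤ #M + ⌊(Fintype.card L : ℝ) / c⌋₊ := by exact_mod_cast hcard
  rw [sub_mul, one_div_mul_eq_div]
  linarith
end

section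
/- Let d ≥ 2, k ≥ 1 be integers, q = d/(d−1), C = 1/(q^k − 1). Consider nonnegative reals z_1, …, z_m with m ≤ d, each of the form z_i = C·(q^{t_i} − 1) with 0 ≤ t_i ≤ k, and weights B_1, …, B_m > 0. Let i* maximize z_i·B_i + C·B_i over 1 ≤ i ≤ m. Then (1 − z_{i*})·B_{i*} + ∑_{i ≠ i*} (1/(d−1))·(z_i + C)·B_i ≤ (1 + C)·B_{i*}. -/
/-!
Writing `M = (z i* + C) B i*`, the claim is that the charges `(z i + C) B i / (d - 1)` of the other
`m - 1 ≤ d - 1` neighbours add up to at most `M`. Each of them is at most `M / (d - 1)` by the choice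
of `i*`, and `M ≥ 0` because `z i* + C = C q^{t i*}` with `C ≥ 0` (as `q ≥ 1`).
-/

open Finset

theorem Finset.sum_one_div_mul_le_of_card_le {ι : Type*} (s : Finset ι) (f : ι → ℝ) {M c : ℝ}
    (hf : ∀ i ∈ s, f i ≤ M) (hM : 0 ≤ M) (hc : 0 < c) (hs : (#s : ℝ) ≤ c) :
    ∑ i ∈ s, 1 / c * f i ≤ M := by
  rw [← mul_sum]
  calc 1 / c * ∑ i ∈ s, f i ≤ 1 / c * (#s * M) := by
        gcongr
        simpa only [nsmul_eq_mul] using sum_le_card_nsmul s f M hf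
    _ ≤ 1 / c * (c * M) := by gcongr
    _ = M := by field_simp

theorem one_le_div_sub_one {d : ℝ} (hd : 1 < d) : 1 ≤ d / (d - 1) := by
  rw [one_le_div (by linarith)]
  linarith

theorem stmt_18_general (d k m : ℕ) (hd : 2 ≤ d) (hm : m ≤ d)
    (q : ℝ) (hq : q = (d : ℝ) / ((d : ℝ) - 1))
    (C : ℝ) (hC : C = 1 / (q ^ k - 1))
    (z B : Fin m → ℝ) (t : Fin m → ℕ)
    (hB : ∀ i, 0 < B i)
    (hz : ∀ i, z i = C * (q ^ (t i) - 1))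
    (istar : Fin m)
    (hstar : ∀ i, z i * B i + C * B i ≤ z istar * B istar + C * B istar) :
    (1 - z istar) * B istar +
      ∑ i ∈ univ.erase istar, (1 / ((d : ℝ) - 1)) * (z i + C) * B i ≤
    (1 + C) * B istar := by
  have hd1 : (1 : ℝ) < d := by exact_mod_cast hd
  have hq1 : 1 ≤ q := hq ▸ one_le_div_sub_one hd1
  have hC0 : 0 ≤ C := hC ▸ one_div_nonneg.2 (sub_nonneg.2 (one_le_pow₀ hq1))
  have hmax : ∀ i ∈ univ.erase istar, (z i + C) * B i ≤ (z istar + C) * B istar := by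
    intro i _
    simpa only [add_mul] using hstar i
  have hM : 0 ≤ (z istar + C) * B istar := by
    refine mul_nonneg ?_ (hB istar).le
    rw [hz, mul_sub, mul_one, sub_add_cancel]
    positivity
  have hcard : (#(univ.erase istar) : ℝ) ≤ d - 1 := by
    rw [card_erase_of_mem (mem_univ _), card_univ, Fintype.card_fin]
    have : ((m - 1 : ℕ) : ℝ) + 1 ≤ d := by exact_mod_cast (by omega : m - 1 + 1 ≤ d)
    linarith
  have hsum := sum_one_div_mul_le_of_card_le _ (fun i => (z i + C) * B i) hmax hM
    (by linarith) hcard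
  simp only [← mul_assoc] at hsum
  linarith

/-- Per-step primal-dual charging inequality: an online vertex with `m ≤ d` unmatched
neighbors with weights `B i > 0` and dual values `z i = C·(q^{t i} - 1)`, `t i ≤ k`,
matched to the neighbor `i*` maximizing `(z i + C)·B i`, incurs total weighted dual
increase `(1 - z i*)·B i* + ∑_{i ≠ i*} (z i + C)·B i/(d-1)` at most `(1 + C)·B i*`. -/
theorem stmt_18 (d k m : ℕ) (hd : 2 ≤ d) (hk : 1 ≤ k) (hm : m ≤ d)
    (q : ℝ) (hq : q = (d : ℝ) / ((d : ℝ) - 1))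
    (C : ℝ) (hC : C = 1 / (q ^ k - 1))
    (z B : Fin m → ℝ) (t : Fin m → ℕ)
    (hB : ∀ i, 0 < B i) (ht : ∀ i, t i ≤ k)
    (hz : ∀ i, z i = C * (q ^ (t i) - 1))
    (istar : Fin m)
    (hstar : ∀ i, z i * B i + C * B i ≤ z istar * B istar + C * B istar) :
    (1 - z istar) * B istar +
      ∑ i ∈ univ.erase istar, (1 / ((d : ℝ) - 1)) * (z i + C) * B i ≤
    (1 + C) * B istar :=
  stmt_18_general d k m hd hm q hq C hC z B t hB hz istar hstar
end
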